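/- The relation s → s' defined by ψ_π(s,s') ≥ 1/2 is not transitive in general: there exists a Markov chain (with a uniformly random initial state among three states) and states s₁, s₂, s₃ with s₁ → s₂, s₂ → s₃, and s₃ → s₁ (so that s₁ → s₃ fails). -/

import Mathlib

open Finset

/-- `#(s→s')`: number of index pairs `t < t'` with `τ t = s` and `τ t' = s'`. -/
def pairCount {T : ℕ} (τ : Fin T → Fin 3) (s s' : Fin 3) : ℕ :=
  ((Finset.univ : Finset (Fin T × Fin T)).filter
    (fun p => p.1 < p.2 ∧ τ p.1 = s ∧ τ p.2 = s')).card

/-- Precedence estimator for a distribution `w` over length-`T` trajectories: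
the probability that `s` precedes `s'` among pairs of occurrences. -/
noncomputable def psi {T : ℕ} (w : (Fin T → Fin 3) → ℝ) (s s' : Fin 3) : ℝ :=
  (∑ τ : Fin T → Fin 3, w τ * (pairCount τ s s' : ℝ)) /
    (∑ τ : Fin T → Fin 3, w τ * ((pairCount τ s s' : ℝ) + (pairCount τ s' s : ℝ)))

/-!
The deterministic cycle `s ↦ s + 1` on `Fin 3`, started uniformly, produces the three rotations
of `(0, 1, 2)`. A state `s` precedes its successor `s + 1` in two of them and follows it in the
third, so `ψ(s, s + 1) = 2/3` for every `s`: each state beats the next one around the cycle,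
and `ψ(0, 2) = ψ(2 + 1, 2) = 1/3`.
-/

section TrajLaw

variable {Ω : Type*} [Fintype Ω] {T : ℕ}

noncomputable def trajLaw (traj : Ω → Fin T → Fin 3) (τ : Fin T → Fin 3) : ℝ :=
  #{ω | traj ω = τ} / Fintype.card Ω

theorem trajLaw_nonneg (traj : Ω → Fin T → Fin 3) (τ : Fin T → Fin 3) :
    0 ≤ trajLaw traj τ := by
  unfold trajLaw
  positivity

theorem sum_trajLaw_mul (traj : Ω → Fin T → Fin 3) (g : (Fin T → Fin 3) → ℝ) :
    ∑ τ, trajLaw traj τ * g τ = (∑ ω, g (traj ω)) / Fintype.card Ω := by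
  rw [← Finset.sum_fiberwise' univ traj g, Finset.sum_div]
  refine Finset.sum_congr rfl fun τ _ => ?_
  rw [trajLaw, Finset.sum_const, nsmul_eq_mul, div_mul_eq_mul_div]

theorem sum_trajLaw [Nonempty Ω] (traj : Ω → Fin T → Fin 3) : ∑ τ, trajLaw traj τ = 1 := by
  simpa using sum_trajLaw_mul traj fun _ => 1

theorem psi_trajLaw [Nonempty Ω] (traj : Ω → Fin T → Fin 3) (s s' : Fin 3) :
    psi (trajLaw traj) s s' =
      (∑ ω, pairCount (traj ω) s s' : ℕ) /
        ((∑ ω, pairCount (traj ω) s s' : ℕ) + (∑ ω, pairCount (traj ω) s' s : ℕ)) := by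
  rw [psi, sum_trajLaw_mul, sum_trajLaw_mul,
    div_div_div_cancel_right₀ (Nat.cast_ne_zero.mpr Fintype.card_ne_zero)]
  push_cast
  rw [Finset.sum_add_distrib]

end TrajLaw

section Cycle

def cycleTraj (k : Fin 3) : Fin 3 → Fin 3 := fun t => k + t

theorem sum_pairCount_cycleTraj_succ (s : Fin 3) :
    ∑ k, pairCount (cycleTraj k) s (s + 1) = 2 := by
  revert s
  decide

theorem sum_pairCount_cycleTraj_pred (s : Fin 3) :
    ∑ k, pairCount (cycleTraj k) (s + 1) s = 1 := by
  revert s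
  decide

theorem psi_cycle_of_eq_add_one {s s' : Fin 3} (h : s' = s + 1) :
    psi (trajLaw cycleTraj) s s' = 2 / 3 := by
  rw [psi_trajLaw, h, sum_pairCount_cycleTraj_succ, sum_pairCount_cycleTraj_pred]
  norm_num

theorem psi_cycle_of_add_one_eq {s s' : Fin 3} (h : s = s' + 1) :
    psi (trajLaw cycleTraj) s s' = 1 / 3 := by
  rw [psi_trajLaw, h, sum_pairCount_cycleTraj_succ, sum_pairCount_cycleTraj_pred]
  norm_num

end Cycle

/-- the relation `s → s'` defined by `ψ(s,s') ≥ 1/2` is not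
transitive in general: there is a distribution over length-3 trajectories on three
states (the three cyclic orderings of `(s₁,s₂,s₃)`, each with probability `1/3`,
as generated by the deterministic 3-cycle with uniform initial state) with
`s₁ → s₂`, `s₂ → s₃`, `s₃ → s₁`, and `s₁ → s₃` fails. -/
theorem arrow_not_transitive :
    ∃ w : (Fin 3 → Fin 3) → ℝ, (∀ τ, 0 ≤ w τ) ∧ (∑ τ : Fin 3 → Fin 3, w τ = 1) ∧
      ∃ s₁ s₂ s₃ : Fin 3, s₁ ≠ s₂ ∧ s₂ ≠ s₃ ∧ s₁ ≠ s₃ ∧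
        psi w s₁ s₂ ≥ 1 / 2 ∧ psi w s₂ s₃ ≥ 1 / 2 ∧ psi w s₃ s₁ ≥ 1 / 2 ∧
          ¬ psi w s₁ s₃ ≥ 1 / 2 := by
  refine ⟨trajLaw cycleTraj, trajLaw_nonneg cycleTraj, sum_trajLaw cycleTraj, 0, 1, 2,
    by decide, by decide, by decide, ?_, ?_, ?_, ?_⟩
  · rw [psi_cycle_of_eq_add_one (by decide)]; norm_num
  · rw [psi_cycle_of_eq_add_one (by decide)]; norm_num
  · rw [psi_cycle_of_eq_add_one (by decide)]; norm_num
  · rw [psi_cycle_of_add_one_eq (by decide)]; norm_num
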